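/- arXiv:1811.02859 — 2 statements merged into one kernel-verified Lean document; each statement's English description precedes it below -/
import Mathlib

section
/- Let λ₁, λ₂ > 0, ρ > 0, β ∈ (0,1), and p ∈ [0,1]. Let X₁ ~ Exp(λ₁) and X₂ ~ Exp(λ₂) be independent, and let E be an event independent of (X₁, X₂) with P(E) = p. Define the random sum rate C = log₂(1 + β·M/((1−β)M + 1/ρ)) + log₂(1 + ρ(1−β)·W), where M = min(X₁, X₂), and W = X₁ on Eᶜ and W = X₂ on E. Then E[C] = (1−p)·φ′(λ₁, ρ(1−β)) + p·φ′(λ₂, ρ(1−β)) + φ(λ₁, ρ) + φ(λ₂, ρ) − φ(λ₁, ρ(1−β)) − φ(λ₂, ρ(1−β)), where φ′(l, φ₀) = (φ₀/ln 2)·∫₀^∞ e^{−l t}/(1 + φ₀ t) dt and φ(l, φ₀) = (l/((λ₁+λ₂) ln 2))·φ₀·∫₀^∞ e^{−(λ₁+λ₂) t}/(1 + φ₀ t) dt. -/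
/-! The rate of the signal decoded by both users telescopes,
`log₂ (1 + βM / ((1 - β)M + 1/ρ)) = log₂ (1 + ρM) - log₂ (1 + ρ(1 - β)M)`, so the average sum rate
is a combination of expectations `E[log₂ (1 + cX)]` with `X` exponential. Integration by parts gives
`E[log (1 + cX)] = c ∫₀^∞ e^{-λt} / (1 + ct) dt` for `X ~ Exp(λ)`. The minimum `M` of the two
independent gains is `Exp(λ₁ + λ₂)`, and `φ(λ₁, ·) + φ(λ₂, ·) = φ′(λ₁ + λ₂, ·)`; the independence of
`E` from the gains splits the other rate into `(1 - p) E[log₂ (1 + cX₁)] + p E[log₂ (1 + cX₂)]`. -/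

open MeasureTheory ProbabilityTheory Real Set
open scoped Classical

/-- `φ′(l, φ₀) = (φ₀/ln 2) ∫₀^∞ e^{-lt}/(1 + φ₀ t) dt`. -/
noncomputable def phiPrime (l φ₀ : ℝ) : ℝ :=
  (φ₀ / Real.log 2) * ∫ t in Set.Ioi (0 : ℝ), Real.exp (-l * t) / (1 + φ₀ * t)

/-- `φ(l, φ₀) = (l/((l₁+l₂) ln 2)) φ₀ ∫₀^∞ e^{-(l₁+l₂)t}/(1 + φ₀ t) dt`. -/
noncomputable def phiFun (l₁ l₂ l φ₀ : ℝ) : ℝ :=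
  (l / ((l₁ + l₂) * Real.log 2)) * φ₀ *
    ∫ t in Set.Ioi (0 : ℝ), Real.exp (-(l₁ + l₂) * t) / (1 + φ₀ * t)

open Filter Topology

lemma norm_log_one_add_mul_mul_exp_le {s c t : ℝ} (hc : 0 ≤ c) (ht : 0 ≤ t) :
    ‖log (1 + c * t) * exp (-s * t)‖ ≤ c * (t * exp (-s * t)) := by
  have hct : 0 ≤ c * t := mul_nonneg hc ht
  rw [norm_mul, norm_of_nonneg (log_nonneg (by linarith)), norm_of_nonneg (exp_pos _).le,
    ← mul_assoc]
  gcongr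
  linarith [log_le_sub_one_of_pos (by linarith : 0 < 1 + c * t)]

lemma integrableOn_Ioi_log_one_add_mul_mul_exp {s c : ℝ} (hs : 0 < s) (hc : 0 ≤ c) :
    IntegrableOn (fun t => log (1 + c * t) * (s * exp (-s * t))) (Ioi 0) := by
  have hint : IntegrableOn (fun t : ℝ => t * exp (-s * t)) (Ioi 0) := by
    simpa using integrableOn_rpow_mul_exp_neg_mul_rpow (s := 1) (p := 1) (by norm_num) one_pos hs
  refine ((hint.const_mul c).const_mul s).mono' (by fun_prop)
    ((ae_restrict_mem measurableSet_Ioi).mono fun t ht => ?_)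
  rw [mul_left_comm, norm_mul, norm_of_nonneg hs.le]
  exact mul_le_mul_of_nonneg_left (norm_log_one_add_mul_mul_exp_le hc (le_of_lt ht)) hs.le

lemma integral_Ioi_log_one_add_mul_mul_exp {s c : ℝ} (hs : 0 < s) (hc : 0 ≤ c) :
    ∫ t in Ioi (0 : ℝ), log (1 + c * t) * (s * exp (-s * t)) =
      c * ∫ t in Ioi (0 : ℝ), exp (-s * t) / (1 + c * t) := by
  have hpos : ∀ t ∈ Ioi (0 : ℝ), 0 < 1 + c * t := fun t ht => by
    have := mul_nonneg hc (le_of_lt ht)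
    linarith
  have hu : ∀ t ∈ Ioi (0 : ℝ), HasDerivAt (fun t => log (1 + c * t)) (c / (1 + c * t)) t :=
    fun t ht => by simpa using (((hasDerivAt_id t).const_mul c).const_add 1).log (hpos t ht).ne'
  have hv : ∀ t ∈ Ioi (0 : ℝ), HasDerivAt (fun t => -exp (-s * t)) (s * exp (-s * t)) t :=
    fun t _ => by simpa [mul_comm] using (((hasDerivAt_id t).const_mul (-s)).exp).fun_neg
  have hu'v : IntegrableOn (fun t => c / (1 + c * t) * -exp (-s * t)) (Ioi 0) := by
    refine ((exp_neg_integrableOn_Ioi 0 hs).const_mul c).mono' (by fun_prop)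
      ((ae_restrict_mem measurableSet_Ioi).mono fun t ht => ?_)
    rw [norm_mul, norm_neg, norm_of_nonneg (exp_pos _).le,
      norm_of_nonneg (div_nonneg hc (hpos t ht).le)]
    gcongr
    exact div_le_self hc (by have := mul_nonneg hc (le_of_lt ht); linarith)
  have h_zero : Tendsto (fun t => log (1 + c * t) * -exp (-s * t)) (𝓝[>] 0) (𝓝 0) := by
    have hcont : ContinuousAt (fun t => log (1 + c * t) * -exp (-s * t)) 0 :=
      ((continuousAt_id.const_mul c).const_add 1).log (by simp) |>.mul (by fun_prop)
    simpa using hcont.tendsto.mono_left nhdsWithin_le_nhds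
  have h_infty : Tendsto (fun t => log (1 + c * t) * -exp (-s * t)) atTop (𝓝 0) := by
    have hlim : Tendsto (fun t : ℝ => t * exp (-s * t)) atTop (𝓝 0) := by
      simpa using tendsto_rpow_mul_exp_neg_mul_atTop_nhds_zero 1 s hs
    refine squeeze_zero_norm' ?_ (by simpa using hlim.const_mul c)
    filter_upwards [eventually_ge_atTop 0] with t ht
    simpa [mul_neg, norm_neg] using norm_log_one_add_mul_mul_exp_le (s := s) hc ht
  rw [integral_Ioi_mul_deriv_eq_deriv_mul hu hv (integrableOn_Ioi_log_one_add_mul_mul_exp hs hc)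
    hu'v h_zero h_infty, ← integral_const_mul]
  simp only [sub_zero, zero_sub, ← integral_neg]
  congr 1 with t
  ring

lemma measurable_logb_one_add_mul (c : ℝ) : Measurable fun x : ℝ => logb 2 (1 + c * x) := by
  unfold logb
  fun_prop

theorem MeasureTheory.Measure.ext_of_Ioi {α : Type*} [TopologicalSpace α] {_ : MeasurableSpace α}
    [SecondCountableTopology α] [LinearOrder α] [OrderTopology α] [BorelSpace α] (μ ν : Measure α)
    [IsProbabilityMeasure μ] [IsProbabilityMeasure ν] (h : ∀ a, μ (Ioi a) = ν (Ioi a)) :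
    μ = ν :=
  Measure.ext_of_Iic μ ν fun a => by
    rw [← compl_Ioi, prob_compl_eq_one_sub measurableSet_Ioi,
      prob_compl_eq_one_sub measurableSet_Ioi, h]

namespace ProbabilityTheory

lemma expMeasure_eq_withDensity (r : ℝ) :
    expMeasure r =
      (volume.restrict (Ici 0)).withDensity fun x => ENNReal.ofReal (r * exp (-r * x)) := by
  rw [← withDensity_indicator measurableSet_Ici]
  refine congrArg volume.withDensity (funext fun x => ?_)
  change exponentialPDF r x = _
  by_cases hx : 0 ≤ x <;> simp [exponentialPDF_eq, hx]

lemma integral_expMeasure {r : ℝ} (hr : 0 ≤ r) (f : ℝ → ℝ) :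
    ∫ x, f x ∂expMeasure r = ∫ x in Ioi 0, f x * (r * exp (-r * x)) := by
  rw [expMeasure_eq_withDensity, integral_withDensity_eq_integral_toReal_smul (by fun_prop)
    (ae_of_all _ fun _ => ENNReal.ofReal_lt_top), integral_Ici_eq_integral_Ioi]
  congr 1 with x
  rw [ENNReal.toReal_ofReal (by positivity), smul_eq_mul, mul_comm]

lemma integrable_expMeasure_iff {r : ℝ} (hr : 0 ≤ r) {f : ℝ → ℝ} :
    Integrable f (expMeasure r) ↔ IntegrableOn (fun x => f x * (r * exp (-r * x))) (Ioi 0) := by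
  rw [expMeasure_eq_withDensity, integrable_withDensity_iff_integrable_smul' (by fun_prop)
    (ae_of_all _ fun _ => ENNReal.ofReal_lt_top), ← integrableOn_Ici_iff_integrableOn_Ioi]
  refine integrable_congr (ae_of_all _ fun x => ?_)
  dsimp only
  rw [ENNReal.toReal_ofReal (by positivity), smul_eq_mul, mul_comm]

lemma ae_nonneg_expMeasure (r : ℝ) : ∀ᵐ x ∂expMeasure r, 0 ≤ x := by
  rw [expMeasure_eq_withDensity]
  exact (withDensity_absolutelyContinuous _ _).ae_le (ae_restrict_mem measurableSet_Ici)

lemma expMeasure_Ioi {r : ℝ} (hr : 0 < r) (x : ℝ) :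
    expMeasure r (Ioi x) = ENNReal.ofReal (exp (-(r * max x 0))) := by
  have := isProbabilityMeasure_expMeasure hr
  rw [← compl_Iic, prob_compl_eq_one_sub measurableSet_Iic, ← ofReal_cdf, ← ENNReal.ofReal_one,
    ← ENNReal.ofReal_sub _ (cdf_nonneg _ _), cdf_expMeasure_eq hr]
  split_ifs with hx
  · simp [max_eq_left hx]
  · simp [max_eq_right (le_of_not_ge hx)]

lemma integrable_logb_one_add_mul_expMeasure {r c : ℝ} (hr : 0 < r) (hc : 0 ≤ c) :
    Integrable (fun x => logb 2 (1 + c * x)) (expMeasure r) := by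
  simp only [logb]
  exact ((integrable_expMeasure_iff hr.le).2
    (integrableOn_Ioi_log_one_add_mul_mul_exp hr hc)).div_const _

lemma integral_logb_one_add_mul_expMeasure {r c : ℝ} (hr : 0 < r) (hc : 0 ≤ c) :
    ∫ x, logb 2 (1 + c * x) ∂expMeasure r = phiPrime r c := by
  simp only [logb]
  rw [integral_div, integral_expMeasure hr.le, integral_Ioi_log_one_add_mul_mul_exp hr hc,
    phiPrime]
  ring

section

variable {Ω : Type*} [MeasurableSpace Ω] {P : Measure Ω} {X : Ω → ℝ} {r c : ℝ}

lemma ae_nonneg_of_map_eq_expMeasure (hX : Measurable X) (hlaw : P.map X = expMeasure r) :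
    ∀ᵐ ω ∂P, 0 ≤ X ω :=
  ae_of_ae_map hX.aemeasurable (hlaw ▸ ae_nonneg_expMeasure r)

lemma integrable_logb_one_add_mul_of_map_eq_expMeasure (hX : Measurable X)
    (hlaw : P.map X = expMeasure r) (hr : 0 < r) (hc : 0 ≤ c) :
    Integrable (fun ω => logb 2 (1 + c * X ω)) P :=
  (integrable_map_measure (measurable_logb_one_add_mul c).aestronglyMeasurable
    hX.aemeasurable).1 (hlaw ▸ integrable_logb_one_add_mul_expMeasure hr hc)

lemma integral_logb_one_add_mul_of_map_eq_expMeasure (hX : Measurable X)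
    (hlaw : P.map X = expMeasure r) (hr : 0 < r) (hc : 0 ≤ c) :
    ∫ ω, logb 2 (1 + c * X ω) ∂P = phiPrime r c := by
  rw [← integral_map hX.aemeasurable (measurable_logb_one_add_mul c).aestronglyMeasurable, hlaw,
    integral_logb_one_add_mul_expMeasure hr hc]

end

lemma IndepFun.map_min_eq_expMeasure {Ω : Type*} [MeasurableSpace Ω] {P : Measure Ω}
    [IsProbabilityMeasure P] {X₁ X₂ : Ω → ℝ} {l₁ l₂ : ℝ} (hind : IndepFun X₁ X₂ P)
    (hl₁ : 0 < l₁) (hl₂ : 0 < l₂) (hm1 : Measurable X₁) (hm2 : Measurable X₂)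
    (hlaw1 : P.map X₁ = expMeasure l₁) (hlaw2 : P.map X₂ = expMeasure l₂) :
    P.map (fun ω => min (X₁ ω) (X₂ ω)) = expMeasure (l₁ + l₂) := by
  have := isProbabilityMeasure_expMeasure (add_pos hl₁ hl₂)
  have := Measure.isProbabilityMeasure_map (μ := P) (hm1.min hm2).aemeasurable
  refine Measure.ext_of_Ioi _ _ fun x => ?_
  have hpre : (fun ω => min (X₁ ω) (X₂ ω)) ⁻¹' Ioi x = X₁ ⁻¹' Ioi x ∩ X₂ ⁻¹' Ioi x := by
    ext
    simp
  rw [Measure.map_apply (hm1.min hm2) measurableSet_Ioi, hpre,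
    hind.measure_inter_preimage_eq_mul _ _ measurableSet_Ioi measurableSet_Ioi,
    ← Measure.map_apply hm1 measurableSet_Ioi, ← Measure.map_apply hm2 measurableSet_Ioi,
    hlaw1, hlaw2, expMeasure_Ioi hl₁, expMeasure_Ioi hl₂, expMeasure_Ioi (add_pos hl₁ hl₂),
    ← ENNReal.ofReal_mul (exp_pos _).le, ← exp_add]
  congr 2
  ring

lemma Indep.map_restrict_eq_smul_map {Ω β : Type*} {m m' mΩ : MeasurableSpace Ω}
    [MeasurableSpace β] {P : Measure Ω} {E : Set Ω} {Y : Ω → β} (hind : Indep m m' P)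
    (hE : MeasurableSet[m] E) (hY' : Measurable[m'] Y) (hY : Measurable Y) :
    (P.restrict E).map Y = P E • P.map Y := by
  ext s hs
  rw [Measure.map_apply hY hs, Measure.restrict_apply (hY hs), Measure.smul_apply,
    Measure.map_apply hY hs, inter_comm, smul_eq_mul]
  exact (Indep_iff _ _ _).1 hind E _ hE (hY' hs)

lemma Indep.setIntegral_comp_eq_mul {Ω β : Type*} {m m' mΩ : MeasurableSpace Ω}
    [MeasurableSpace β] {P : Measure Ω} {E : Set Ω} {Y : Ω → β} {f : β → ℝ}
    (hind : Indep m m' P) (hE : MeasurableSet[m] E) (hY' : Measurable[m'] Y) (hY : Measurable Y)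
    (hf : Measurable f) :
    ∫ ω in E, f (Y ω) ∂P = P.real E * ∫ y, f y ∂P.map Y := by
  rw [← integral_map hY.aemeasurable hf.aestronglyMeasurable,
    hind.map_restrict_eq_smul_map hE hY' hY, integral_smul_measure, smul_eq_mul, measureReal_def]

end ProbabilityTheory

lemma phiFun_add_phiFun {l₁ l₂ : ℝ} (h : l₁ + l₂ ≠ 0) (c : ℝ) :
    phiFun l₁ l₂ l₁ c + phiFun l₁ l₂ l₂ c = phiPrime (l₁ + l₂) c := by
  have : log 2 ≠ 0 := (log_pos one_lt_two).ne'
  unfold phiFun phiPrime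
  field_simp

lemma logb_one_add_sinr {ρ β m : ℝ} (hρ : 0 < ρ) (hβ : β ≤ 1) (hm : 0 ≤ m) :
    logb 2 (1 + β * m / ((1 - β) * m + 1 / ρ)) =
      logb 2 (1 + ρ * m) - logb 2 (1 + ρ * (1 - β) * m) := by
  have h₁ : 0 < 1 + ρ * m := by positivity
  have h₂ : 0 < 1 + ρ * (1 - β) * m := by
    have : 0 ≤ 1 - β := by linarith
    positivity
  have hden : (1 - β) * m + 1 / ρ = (1 + ρ * (1 - β) * m) / ρ := by
    field_simp
    ring
  rw [← logb_div h₁.ne' h₂.ne', hden, div_div_eq_mul_div]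
  congr 1
  rw [eq_div_iff h₂.ne', add_mul, div_mul_cancel₀ _ h₂.ne']
  ring

theorem downlink_noma_average_sum_rate_general
    {Ω : Type*} [MeasurableSpace Ω] (P : Measure Ω) [IsProbabilityMeasure P]
    (l₁ l₂ ρ β p : ℝ) (hl₁ : 0 < l₁) (hl₂ : 0 < l₂) (hρ : 0 < ρ)
    (hβ : β ∈ Set.Ioo (0 : ℝ) 1)
    (X₁ X₂ : Ω → ℝ) (hm1 : Measurable X₁) (hm2 : Measurable X₂)
    (hlaw1 : P.map X₁ = expMeasure l₁) (hlaw2 : P.map X₂ = expMeasure l₂)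
    (hind : IndepFun X₁ X₂ P)
    (E : Set Ω) (hE : MeasurableSet E) (hPE : (P E).toReal = p)
    (hindE : Indep (MeasurableSpace.generateFrom {E})
      (MeasurableSpace.comap (fun ω => (X₁ ω, X₂ ω)) inferInstance) P) :
    ∫ ω, (Real.logb 2 (1 + β * min (X₁ ω) (X₂ ω) /
            ((1 - β) * min (X₁ ω) (X₂ ω) + 1 / ρ)) +
          Real.logb 2 (1 + ρ * (1 - β) * (if ω ∈ E then X₂ ω else X₁ ω))) ∂P =
      (1 - p) * phiPrime l₁ (ρ * (1 - β)) + p * phiPrime l₂ (ρ * (1 - β)) +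
      phiFun l₁ l₂ l₁ ρ + phiFun l₁ l₂ l₂ ρ -
      phiFun l₁ l₂ l₁ (ρ * (1 - β)) - phiFun l₁ l₂ l₂ (ρ * (1 - β)) := by
  set c := ρ * (1 - β)
  have hc : 0 ≤ c := mul_nonneg hρ.le (sub_nonneg.2 hβ.2.le)
  have hl : 0 < l₁ + l₂ := add_pos hl₁ hl₂
  have hM := hm1.min hm2
  have hlawM := hind.map_min_eq_expMeasure hl₁ hl₂ hm1 hm2 hlaw1 hlaw2
  have hrate : (fun ω => logb 2 (1 + β * min (X₁ ω) (X₂ ω) /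
      ((1 - β) * min (X₁ ω) (X₂ ω) + 1 / ρ)) + logb 2 (1 + c * (if ω ∈ E then X₂ ω else X₁ ω)))
      =ᵐ[P] fun ω => (logb 2 (1 + ρ * min (X₁ ω) (X₂ ω)) - logb 2 (1 + c * min (X₁ ω) (X₂ ω))) +
        E.piecewise (fun ω => logb 2 (1 + c * X₂ ω)) (fun ω => logb 2 (1 + c * X₁ ω)) ω := by
    filter_upwards [ae_nonneg_of_map_eq_expMeasure hm1 hlaw1,
      ae_nonneg_of_map_eq_expMeasure hm2 hlaw2] with ω h₁ h₂
    rw [logb_one_add_sinr hρ hβ.2.le (le_min h₁ h₂), Set.piecewise]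
    split_ifs <;> rfl
  have hintM {d : ℝ} (hd : 0 ≤ d) :=
    integrable_logb_one_add_mul_of_map_eq_expMeasure hM hlawM hl hd
  have hint₁ := integrable_logb_one_add_mul_of_map_eq_expMeasure hm1 hlaw1 hl₁ hc
  have hint₂ := integrable_logb_one_add_mul_of_map_eq_expMeasure hm2 hlaw2 hl₂ hc
  have hEgen : MeasurableSet[MeasurableSpace.generateFrom {E}] E :=
    MeasurableSpace.measurableSet_generateFrom rfl
  have hpair := comap_measurable (m := inferInstance) fun ω => (X₁ ω, X₂ ω)
  rw [integral_congr_ae hrate,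
    integral_add ((hintM hρ.le).sub' (hintM hc))
      (Integrable.piecewise hE hint₂.integrableOn hint₁.integrableOn),
    integral_sub (hintM hρ.le) (hintM hc),
    integral_piecewise hE hint₂.integrableOn hint₁.integrableOn,
    hindE.setIntegral_comp_eq_mul hEgen hpair.snd hm2 (measurable_logb_one_add_mul c),
    hindE.setIntegral_comp_eq_mul hEgen.compl hpair.fst hm1 (measurable_logb_one_add_mul c),
    integral_logb_one_add_mul_of_map_eq_expMeasure hM hlawM hl hρ.le,
    integral_logb_one_add_mul_of_map_eq_expMeasure hM hlawM hl hc, hlaw1, hlaw2,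
    integral_logb_one_add_mul_expMeasure hl₁ hc, integral_logb_one_add_mul_expMeasure hl₂ hc,
    probReal_compl_eq_one_sub hE, measureReal_def, hPE,
    ← phiFun_add_phiFun hl.ne', ← phiFun_add_phiFun hl.ne']
  ring

/-- Proposition 1: average sum rate of two-user downlink distance-based NOMA.
With independent `X₁ ~ Exp(l₁)`, `X₂ ~ Exp(l₂)`, an independent event `E` of probability `p`
(disordered distance estimates), `M = min(X₁, X₂)` and `W = X₁` on `Eᶜ`, `W = X₂` on `E`,
the average of `C = log₂(1 + βM/((1-β)M + 1/ρ)) + log₂(1 + ρ(1-β)W)` equals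
`(1-p)φ′(l₁, ρ(1-β)) + pφ′(l₂, ρ(1-β)) + φ(l₁,ρ) + φ(l₂,ρ) - φ(l₁,ρ(1-β)) - φ(l₂,ρ(1-β))`. -/
theorem downlink_noma_average_sum_rate
    {Ω : Type*} [MeasurableSpace Ω] (P : Measure Ω) [IsProbabilityMeasure P]
    (l₁ l₂ ρ β p : ℝ) (hl₁ : 0 < l₁) (hl₂ : 0 < l₂) (hρ : 0 < ρ)
    (hβ : β ∈ Set.Ioo (0 : ℝ) 1) (hp : p ∈ Set.Icc (0 : ℝ) 1)
    (X₁ X₂ : Ω → ℝ) (hm1 : Measurable X₁) (hm2 : Measurable X₂)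
    (hlaw1 : P.map X₁ = expMeasure l₁) (hlaw2 : P.map X₂ = expMeasure l₂)
    (hind : IndepFun X₁ X₂ P)
    (E : Set Ω) (hE : MeasurableSet E) (hPE : (P E).toReal = p)
    (hindE : Indep (MeasurableSpace.generateFrom {E})
      (MeasurableSpace.comap (fun ω => (X₁ ω, X₂ ω)) inferInstance) P) :
    ∫ ω, (Real.logb 2 (1 + β * min (X₁ ω) (X₂ ω) /
            ((1 - β) * min (X₁ ω) (X₂ ω) + 1 / ρ)) +
          Real.logb 2 (1 + ρ * (1 - β) * (if ω ∈ E then X₂ ω else X₁ ω))) ∂P =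
      (1 - p) * phiPrime l₁ (ρ * (1 - β)) + p * phiPrime l₂ (ρ * (1 - β)) +
      phiFun l₁ l₂ l₁ ρ + phiFun l₁ l₂ l₂ ρ -
      phiFun l₁ l₂ l₁ (ρ * (1 - β)) - phiFun l₁ l₂ l₂ (ρ * (1 - β)) :=
  downlink_noma_average_sum_rate_general P l₁ l₂ ρ β p hl₁ hl₂ hρ hβ X₁ X₂ hm1 hm2 hlaw1 hlaw2 hind
    E hE hPE hindE
end

section
/- Let λ₁, λ₂, ρ₁, ρ₂ > 0, ε₀ > 0, p ∈ [0,1], and set B = ε₀/ρ₂, C = ε₀/ρ₁, k = ε₀ρ₂/ρ₁. Let X₁ ~ Exp(λ₁) and X₂ ~ Exp(λ₂) be independent, and let E be an event independent of (X₁,X₂) with P(E) = p. Define the success event S = ({X₁ > kX₂ + C} ∩ {X₂ > B}) on Eᶜ and S = ({X₂ > kX₁ + C} ∩ {X₁ > B}) on E. Then P(Sᶜ) = 1 − (1−p)·(λ₂/(λ₂+kλ₁))·e^{−λ₁C − (λ₂+kλ₁)B} − p·(λ₁/(λ₁+kλ₂))·e^{−λ₂C − (λ₁+kλ₂)B}.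 -/
open MeasureTheory ProbabilityTheory Real Set

/-!
Since the order error `E` is independent of the gains, the success probability splits as
`(1 - p) P(X₁ > kX₂ + C, X₂ > B) + p P(X₂ > kX₁ + C, X₁ > B)`. Each joint tail is obtained by
integrating the exponential tail `P(X₁ > ky + C) = e^{-l₁(ky + C)}` against the density of `X₂`
over `(B, ∞)`; this tail formula needs the threshold `ky + C` to be nonnegative, which is where
the signs of `B`, `C` and `k` enter.
-/

lemma expMeasure_Ioi {r t : ℝ} (hr : 0 < r) (ht : 0 ≤ t) :
    expMeasure r (Ioi t) = ENNReal.ofReal (exp (-(r * t))) := by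
  have := isProbabilityMeasure_expMeasure hr
  have hcdf_nonneg : 0 ≤ 1 - exp (-(r * t)) :=
    sub_nonneg.2 (exp_le_one_iff.2 (neg_nonpos.2 (mul_nonneg hr.le ht)))
  rw [← compl_Iic, prob_compl_eq_one_sub measurableSet_Iic, ← ofReal_cdf,
    cdf_expMeasure_eq hr, if_pos ht, ← ENNReal.ofReal_one,
    ← ENNReal.ofReal_sub _ hcdf_nonneg, sub_sub_cancel]

lemma setLIntegral_expMeasure_Ioi_exp {r a b B : ℝ} (hr : 0 < r) (hra : 0 < r + a)
    (hB : 0 ≤ B) :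
    ∫⁻ y in Ioi B, ENNReal.ofReal (exp (-(a * y + b))) ∂expMeasure r
      = ENNReal.ofReal (r / (r + a) * exp (-b - (r + a) * B)) := by
  have hdensity : ∀ y ∈ Ioi B, exponentialPDF r y * ENNReal.ofReal (exp (-(a * y + b)))
      = ENNReal.ofReal (r * exp (-b) * exp (-(r + a) * y)) := by
    intro y hy
    rw [exponentialPDF_of_nonneg (hB.trans hy.le), ← ENNReal.ofReal_mul (by positivity),
      mul_assoc, mul_right_comm, ← exp_add, mul_assoc, ← exp_add]
    ring_nf
  have hint : IntegrableOn (fun y => exp (-(r + a) * y)) (Ioi B) := by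
    simpa [neg_mul] using exp_neg_integrableOn_Ioi B hra
  have hexp : expMeasure r = volume.withDensity (exponentialPDF r) := rfl
  have hpdf : Measurable (exponentialPDF r) := (measurable_exponentialPDFReal r).ennreal_ofReal
  rw [hexp, setLIntegral_withDensity_eq_setLIntegral_mul _ hpdf (by fun_prop) measurableSet_Ioi]
  simp only [Pi.mul_apply]
  rw [setLIntegral_congr_fun measurableSet_Ioi hdensity,
    ← ofReal_integral_eq_lintegral_ofReal (hint.const_mul _)
      (Filter.Eventually.of_forall fun y => by positivity),
    integral_const_mul, integral_exp_mul_Ioi (by linarith)]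
  congr 1
  rw [sub_eq_add_neg, exp_add]
  field_simp

lemma measurableSet_mul_add_lt_and_lt {Ω : Type*} {m : MeasurableSpace Ω} {X Y : Ω → ℝ}
    (hX : Measurable X) (hY : Measurable Y) (k C B : ℝ) :
    MeasurableSet {ω | k * Y ω + C < X ω ∧ B < Y ω} :=
  (measurableSet_lt (by fun_prop) hX).inter (measurableSet_lt measurable_const hY)

lemma expMeasure_prod_setOf_mul_add_lt_and_lt {l₁ l₂ k C B : ℝ} (hl₁ : 0 < l₁) (hl₂ : 0 < l₂)
    (hk : 0 ≤ k) (hC : 0 ≤ C) (hB : 0 ≤ B) :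
    (expMeasure l₁).prod (expMeasure l₂) {q | k * q.2 + C < q.1 ∧ B < q.2}
      = ENNReal.ofReal (l₂ / (l₂ + k * l₁) * exp (-l₁ * C - (l₂ + k * l₁) * B)) := by
  have := isProbabilityMeasure_expMeasure hl₁
  have := isProbabilityMeasure_expMeasure hl₂
  have hslice : ∀ y, expMeasure l₁ ((fun x => (x, y)) ⁻¹' {q | k * q.2 + C < q.1 ∧ B < q.2})
      = (Ioi B).indicator (fun y => ENNReal.ofReal (exp (-(l₁ * k * y + l₁ * C)))) y := by
    intro y
    by_cases hy : B < y
    · have hsection : (fun x => (x, y)) ⁻¹' {q | k * q.2 + C < q.1 ∧ B < q.2}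
          = Ioi (k * y + C) := by
        ext x; simp [hy]
      rw [indicator_of_mem (show y ∈ Ioi B from hy), hsection, expMeasure_Ioi hl₁ (by nlinarith)]
      ring_nf
    · simp [hy]
  rw [Measure.prod_apply_symm (measurableSet_mul_add_lt_and_lt measurable_fst measurable_snd _ _ _),
    funext hslice, lintegral_indicator measurableSet_Ioi,
    setLIntegral_expMeasure_Ioi_exp hl₂ (by positivity) hB]
  ring_nf

lemma measureReal_mul_add_lt_and_lt_of_indepFun {Ω : Type*} [MeasurableSpace Ω] {P : Measure Ω}
    [IsProbabilityMeasure P] {X Y : Ω → ℝ} {l₁ l₂ k C B : ℝ} (hX : Measurable X)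
    (hY : Measurable Y) (hlawX : P.map X = expMeasure l₁) (hlawY : P.map Y = expMeasure l₂)
    (hXY : IndepFun X Y P) (hl₁ : 0 < l₁) (hl₂ : 0 < l₂) (hk : 0 ≤ k) (hC : 0 ≤ C)
    (hB : 0 ≤ B) :
    P.real {ω | k * Y ω + C < X ω ∧ B < Y ω}
      = l₂ / (l₂ + k * l₁) * exp (-l₁ * C - (l₂ + k * l₁) * B) := by
  have hjoint : P.map (fun ω => (X ω, Y ω)) = (expMeasure l₁).prod (expMeasure l₂) := by
    rw [(indepFun_iff_map_prod_eq_prod_map_map hX.aemeasurable hY.aemeasurable).1 hXY,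
      hlawX, hlawY]
  have hpreimage : {ω | k * Y ω + C < X ω ∧ B < Y ω}
      = (fun ω => (X ω, Y ω)) ⁻¹' {q | k * q.2 + C < q.1 ∧ B < q.2} := rfl
  rw [measureReal_def, hpreimage, ← Measure.map_apply (hX.prodMk hY)
      (measurableSet_mul_add_lt_and_lt measurable_fst measurable_snd _ _ _),
    hjoint, expMeasure_prod_setOf_mul_add_lt_and_lt hl₁ hl₂ hk hC hB,
    ENNReal.toReal_ofReal (by positivity)]

lemma measureReal_compl_inter_union_inter_of_indep {Ω : Type*} {m m₀ : MeasurableSpace Ω}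
    {P : Measure Ω} [IsProbabilityMeasure P] {E A A' : Set Ω} (hm : m ≤ m₀)
    (hE : MeasurableSet E) (hEm : Indep (MeasurableSpace.generateFrom {E}) m P)
    (hA : MeasurableSet[m] A) (hA' : MeasurableSet[m] A') :
    P.real ((Eᶜ ∩ A) ∪ (E ∩ A')) = (1 - P.real E) * P.real A + P.real E * P.real A' := by
  have hprod := (Indep_iff _ _ P).1 hEm
  have hE' : MeasurableSet[MeasurableSpace.generateFrom {E}] E :=
    MeasurableSpace.measurableSet_generateFrom rfl
  have hdisj : Disjoint (Eᶜ ∩ A) (E ∩ A') :=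
    disjoint_compl_left.mono inter_subset_left inter_subset_left
  rw [measureReal_union hdisj (hE.inter (hm _ hA')), measureReal_def, measureReal_def,
    hprod _ _ hE'.compl hA, hprod _ _ hE' hA', ENNReal.toReal_mul, ENNReal.toReal_mul,
    ← measureReal_def, ← measureReal_def, ← measureReal_def, ← measureReal_def,
    probReal_compl_eq_one_sub hE]

theorem uplink_noma_common_outage_probability_general
    {Ω : Type*} [MeasurableSpace Ω] (P : Measure Ω) [IsProbabilityMeasure P]
    (l₁ l₂ ρ₁ ρ₂ ε₀ p B C k : ℝ)
    (hl₁ : 0 < l₁) (hl₂ : 0 < l₂) (hρ₁ : 0 < ρ₁) (hρ₂ : 0 < ρ₂) (hε₀ : 0 < ε₀)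
    (hBdef : B = ε₀ / ρ₂) (hCdef : C = ε₀ / ρ₁) (hkdef : k = ε₀ * ρ₂ / ρ₁)
    (X₁ X₂ : Ω → ℝ) (hm1 : Measurable X₁) (hm2 : Measurable X₂)
    (hlaw1 : P.map X₁ = expMeasure l₁) (hlaw2 : P.map X₂ = expMeasure l₂)
    (hind : IndepFun X₁ X₂ P)
    (E : Set Ω) (hE : MeasurableSet E) (hPE : (P E).toReal = p)
    (hindE : Indep (MeasurableSpace.generateFrom {E})
      (MeasurableSpace.comap (fun ω => (X₁ ω, X₂ ω)) inferInstance) P)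
    (S : Set Ω)
    (hS : S = (Eᶜ ∩ {ω | k * X₂ ω + C < X₁ ω ∧ B < X₂ ω}) ∪
              (E ∩ {ω | k * X₁ ω + C < X₂ ω ∧ B < X₁ ω})) :
    (P Sᶜ).toReal =
      1 - (1 - p) * (l₂ / (l₂ + k * l₁)) * Real.exp (-l₁ * C - (l₂ + k * l₁) * B) -
        p * (l₁ / (l₁ + k * l₂)) * Real.exp (-l₂ * C - (l₁ + k * l₂) * B) := by
  have hB : 0 ≤ B := hBdef ▸ by positivity
  have hC : 0 ≤ C := hCdef ▸ by positivity
  have hk : 0 ≤ k := hkdef ▸ by positivity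
  have hX₁ : Measurable[MeasurableSpace.comap (fun ω => (X₁ ω, X₂ ω)) inferInstance] X₁ :=
    (comap_measurable _).fst
  have hX₂ : Measurable[MeasurableSpace.comap (fun ω => (X₁ ω, X₂ ω)) inferInstance] X₂ :=
    (comap_measurable _).snd
  subst hS
  have hSmeas :=
    (hE.compl.inter (measurableSet_mul_add_lt_and_lt hm1 hm2 k C B)).union
      (hE.inter (measurableSet_mul_add_lt_and_lt hm2 hm1 k C B))
  rw [← measureReal_def, probReal_compl_eq_one_sub hSmeas,
    measureReal_compl_inter_union_inter_of_indep (hm1.prodMk hm2).comap_le hE hindE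
      (measurableSet_mul_add_lt_and_lt hX₁ hX₂ k C B)
      (measurableSet_mul_add_lt_and_lt hX₂ hX₁ k C B),
    measureReal_def, hPE,
    measureReal_mul_add_lt_and_lt_of_indepFun hm1 hm2 hlaw1 hlaw2 hind hl₁ hl₂ hk hC hB,
    measureReal_mul_add_lt_and_lt_of_indepFun hm2 hm1 hlaw2 hlaw1 hind.symm hl₂ hl₁ hk hC hB]
  ring

/-- Proposition 4: the common outage probability of two-user uplink distance-based NOMA.
With independent gains `X₁ ~ Exp(l₁)`, `X₂ ~ Exp(l₂)`, an independent event `E` of probability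
`p` (disordered distance estimates), `B = ε₀/ρ₂`, `C = ε₀/ρ₁`, `k = ε₀ρ₂/ρ₁`, and success
event `S = (Eᶜ ∩ {X₁ > kX₂ + C, X₂ > B}) ∪ (E ∩ {X₂ > kX₁ + C, X₁ > B})`, one has
`P(Sᶜ) = 1 - (1-p)(l₂/(l₂+kl₁))e^{-l₁C-(l₂+kl₁)B} - p(l₁/(l₁+kl₂))e^{-l₂C-(l₁+kl₂)B}`. -/
theorem uplink_noma_common_outage_probability
    {Ω : Type*} [MeasurableSpace Ω] (P : Measure Ω) [IsProbabilityMeasure P]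
    (l₁ l₂ ρ₁ ρ₂ ε₀ p B C k : ℝ)
    (hl₁ : 0 < l₁) (hl₂ : 0 < l₂) (hρ₁ : 0 < ρ₁) (hρ₂ : 0 < ρ₂) (hε₀ : 0 < ε₀)
    (hp : p ∈ Set.Icc (0 : ℝ) 1)
    (hBdef : B = ε₀ / ρ₂) (hCdef : C = ε₀ / ρ₁) (hkdef : k = ε₀ * ρ₂ / ρ₁)
    (X₁ X₂ : Ω → ℝ) (hm1 : Measurable X₁) (hm2 : Measurable X₂)
    (hlaw1 : P.map X₁ = expMeasure l₁) (hlaw2 : P.map X₂ = expMeasure l₂)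
    (hind : IndepFun X₁ X₂ P)
    (E : Set Ω) (hE : MeasurableSet E) (hPE : (P E).toReal = p)
    (hindE : Indep (MeasurableSpace.generateFrom {E})
      (MeasurableSpace.comap (fun ω => (X₁ ω, X₂ ω)) inferInstance) P)
    (S : Set Ω)
    (hS : S = (Eᶜ ∩ {ω | k * X₂ ω + C < X₁ ω ∧ B < X₂ ω}) ∪
              (E ∩ {ω | k * X₁ ω + C < X₂ ω ∧ B < X₁ ω})) :
    (P Sᶜ).toReal =
      1 - (1 - p) * (l₂ / (l₂ + k * l₁)) * Real.exp (-l₁ * C - (l₂ + k * l₁) * B) -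
        p * (l₁ / (l₁ + k * l₂)) * Real.exp (-l₂ * C - (l₁ + k * l₂) * B) :=
  uplink_noma_common_outage_probability_general P l₁ l₂ ρ₁ ρ₂ ε₀ p B C k hl₁ hl₂ hρ₁ hρ₂ hε₀ hBdef
    hCdef hkdef X₁ X₂ hm1 hm2 hlaw1 hlaw2 hind E hE hPE hindE S hS
end
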